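/- arXiv:2006.07242 — 2 statements merged into one kernel-verified Lean document; each statement's English description precedes it below -/
import Mathlib

section
/- (Domain adaptation bound, Ben-David et al., as restated in Theorem 3 of the paper.) Let X be a measurable space, let H be a nonempty class of measurable hypotheses h : X → {0,1}, and let D_S and D_T be probability measures on X × {0,1}. Then for every h ∈ H, L_{D_T}(h) ≤ L_{D_S}(h) + (1/2) d_{H∆H}(D_S, D_T) + λ, where λ := inf_{h'∈H} ( L_{D_S}(h') + L_{D_T}(h') ). -/
open MeasureTheory

/-- Embed a `{0,1}`-valued hypothesis `h : X → Bool` as a real-valued predictor. -/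
noncomputable def toRealFn {X : Type*} (h : X → Bool) : X → ℝ :=
  fun x => if h x then (1 : ℝ) else 0

/-- The risk of a real-valued predictor `f : X → ℝ`
under a probability measure `D` on `X × Bool` (labels in `{0,1}`):
`L_D(f) = E_{(x,y) ∼ D} [ |f x − y| ]`. -/
noncomputable def risk {X : Type*} [MeasurableSpace X]
    (D : Measure (X × Bool)) (f : X → ℝ) : ℝ :=
  ∫ p, |f p.1 - (if p.2 then (1 : ℝ) else 0)| ∂D

/-- The `H∆H`-divergence between two measures `D, D'` on `X × Bool`:
`d_{H∆H}(D, D') = 2 sup_{h, h' ∈ H} | Pr_{x ∼ D_X}[h x ≠ h' x] − Pr_{x ∼ D'_X}[h x ≠ h' x] |`,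
where `D_X, D'_X` are the marginals on `X`. -/
noncomputable def dHdH {X : Type*} [MeasurableSpace X] (H : Set (X → Bool))
    (D D' : Measure (X × Bool)) : ℝ :=
  2 * ⨆ (h : H) (h' : H),
    |((D.map Prod.fst) {x | (h : X → Bool) x ≠ (h' : X → Bool) x}).toReal -
      ((D'.map Prod.fst) {x | (h : X → Bool) x ≠ (h' : X → Bool) x}).toReal|

/-! For any `g ∈ H`, disagreement probabilities satisfy the triangle inequality, so
`L_T(h) ≤ L_T(g) + P_T(h ≠ g)` and `P_S(h ≠ g) ≤ L_S(h) + L_S(g)`; the disagreement set of two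
members of `H` is one of the sets in the supremum defining `d_{H∆H}`, so
`P_T(h ≠ g) ≤ P_S(h ≠ g) + d_{H∆H}/2`. Chaining these and minimising over `g` gives the bound. -/

theorem risk_toRealFn {X : Type*} [MeasurableSpace X] (D : Measure (X × Bool))
    {h : X → Bool} (hh : Measurable h) :
    risk D (toRealFn h) = D.real {p | h p.1 ≠ p.2} := by
  have hs : MeasurableSet {p : X × Bool | h p.1 ≠ p.2} :=
    (measurableSet_eq_fun (hh.comp measurable_fst) measurable_snd).compl
  rw [risk, ← integral_indicator_one hs]
  congr 1 with ⟨x, y⟩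
  cases hx : h x <;> cases y <;> simp [toRealFn, hx]

theorem measureReal_ne_le_add {Y β : Type*} [MeasurableSpace Y] (μ : Measure Y)
    [IsFiniteMeasure μ] (f g k : Y → β) :
    μ.real {y | f y ≠ g y} ≤ μ.real {y | f y ≠ k y} + μ.real {y | k y ≠ g y} := by
  refine (measureReal_mono fun y (hy : f y ≠ g y) => ?_).trans (measureReal_union_le _ _)
  by_cases hk : f y = k y
  · exact Or.inr fun e => hy (hk.trans e)
  · exact Or.inl hk

theorem abs_measureReal_sub_le {α : Type*} [MeasurableSpace α] (μ ν : Measure α)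
    [IsFiniteMeasure μ] [IsFiniteMeasure ν] (s : Set α) :
    |μ.real s - ν.real s| ≤ μ.real Set.univ + ν.real Set.univ := by
  have hμ : μ.real s ≤ μ.real Set.univ := measureReal_mono (Set.subset_univ s)
  have hν : ν.real s ≤ ν.real Set.univ := measureReal_mono (Set.subset_univ s)
  rw [abs_sub_le_iff]
  constructor <;> linarith [measureReal_nonneg (μ := μ) (s := s),
    measureReal_nonneg (μ := ν) (s := s)]

theorem abs_measureReal_sub_le_half_dHdH {X : Type*} [MeasurableSpace X]
    {H : Set (X → Bool)} (D D' : Measure (X × Bool)) [IsFiniteMeasure D] [IsFiniteMeasure D']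
    {h g : X → Bool} (hh : h ∈ H) (hg : g ∈ H) :
    |(D.map Prod.fst).real {x | h x ≠ g x} - (D'.map Prod.fst).real {x | h x ≠ g x}|
      ≤ (1 / 2 : ℝ) * dHdH H D D' := by
  set F : H → H → ℝ := fun h g =>
    |(D.map Prod.fst).real {x | (h : X → Bool) x ≠ (g : X → Bool) x} -
      (D'.map Prod.fst).real {x | (h : X → Bool) x ≠ (g : X → Bool) x}|
  have hF : ∀ h g, F h g ≤ (D.map Prod.fst).real Set.univ + (D'.map Prod.fst).real Set.univ :=
    fun _ _ => abs_measureReal_sub_le _ _ _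
  have : Nonempty H := ⟨⟨h, hh⟩⟩
  have hbdd : BddAbove (Set.range fun h => ⨆ g, F h g) :=
    ⟨_, Set.forall_mem_range.2 fun h => ciSup_le (hF h)⟩
  rw [dHdH, one_div, inv_mul_cancel_left₀ two_ne_zero]
  exact le_ciSup_of_le hbdd ⟨h, hh⟩
    (le_ciSup (f := F ⟨h, hh⟩) ⟨_, Set.forall_mem_range.2 (hF _)⟩ ⟨g, hg⟩)

theorem risk_le_risk_add_half_dHdH_add {X : Type*} [MeasurableSpace X] {H : Set (X → Bool)}
    (DS DT : Measure (X × Bool)) [IsFiniteMeasure DS] [IsFiniteMeasure DT] {h g : X → Bool}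
    (hH : h ∈ H) (gH : g ∈ H) (hm : Measurable h) (gm : Measurable g) :
    risk DT (toRealFn h) ≤ risk DS (toRealFn h) + (1 / 2 : ℝ) * dHdH H DS DT +
      (risk DS (toRealFn g) + risk DT (toRealFn g)) := by
  have marginal (D : Measure (X × Bool)) :
      (D.map Prod.fst).real {x | h x ≠ g x} = D.real {p | h p.1 ≠ g p.1} :=
    map_measureReal_apply measurable_fst (measurableSet_eq_fun hm gm).compl
  have shift := abs_measureReal_sub_le_half_dHdH DS DT hH gH
  rw [marginal, marginal] at shift
  have triangleT : DT.real {p | h p.1 ≠ p.2} ≤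
      DT.real {p | h p.1 ≠ g p.1} + DT.real {p | g p.1 ≠ p.2} :=
    measureReal_ne_le_add DT _ _ (g ∘ Prod.fst)
  have triangleS : DS.real {p | h p.1 ≠ g p.1} ≤
      DS.real {p | h p.1 ≠ p.2} + DS.real {p | g p.1 ≠ p.2} := by
    convert measureReal_ne_le_add DS _ _ Prod.snd using 3
    exact Set.ext fun _ => ne_comm
  rw [risk_toRealFn DT hm, risk_toRealFn DS hm, risk_toRealFn DS gm, risk_toRealFn DT gm]
  linarith [neg_abs_le (DS.real {p | h p.1 ≠ g p.1} - DT.real {p | h p.1 ≠ g p.1})]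

theorem domain_adaptation_bound_general {X : Type*} [MeasurableSpace X]
    (H : Set (X → Bool)) (hHmeas : ∀ h ∈ H, Measurable h)
    (DS DT : Measure (X × Bool)) [IsProbabilityMeasure DS] [IsProbabilityMeasure DT]
    (h : X → Bool) (hmem : h ∈ H) :
    risk DT (toRealFn h) ≤
      risk DS (toRealFn h) + (1 / 2 : ℝ) * dHdH H DS DT +
        ⨅ h' : H, (risk DS (toRealFn (h' : X → Bool)) + risk DT (toRealFn (h' : X → Bool))) := by
  have : Nonempty H := ⟨⟨h, hmem⟩⟩
  rw [← sub_le_iff_le_add']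
  exact le_ciInf fun g => sub_le_iff_le_add'.2 <|
    risk_le_risk_add_half_dHdH_add DS DT hmem g.2 (hHmeas h hmem) (hHmeas g g.2)

/-- domain adaptation bound, Ben-David et al.:
`L_{D_T}(h) ≤ L_{D_S}(h) + (1/2) d_{H∆H}(D_S, D_T) + λ` where
`λ = inf_{h' ∈ H} (L_{D_S}(h') + L_{D_T}(h'))`. -/
theorem domain_adaptation_bound {X : Type*} [MeasurableSpace X]
    (H : Set (X → Bool)) (hne : H.Nonempty) (hHmeas : ∀ h ∈ H, Measurable h)
    (DS DT : Measure (X × Bool)) [IsProbabilityMeasure DS] [IsProbabilityMeasure DT]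
    (h : X → Bool) (hmem : h ∈ H) :
    risk DT (toRealFn h) ≤
      risk DS (toRealFn h) + (1 / 2 : ℝ) * dHdH H DS DT +
        ⨅ h' : H, (risk DS (toRealFn (h' : X → Bool)) + risk DT (toRealFn (h' : X → Bool))) :=
  domain_adaptation_bound_general H hHmeas DS DT h hmem
end

section
/- (Deterministic core of Theorem 1/Theorem 2 of the paper.) Let X be a measurable space, let H be a nonempty class of measurable hypotheses h : X → {0,1}, let D, D_1, …, D_K be probability measures on X × {0,1}, and let h_1, …, h_K ∈ H be arbitrary. Then the risk under D of the ensemble of h_1, …, h_K satisfies L_D((1/K) Σ_{k=1}^K h_k) ≤ (1/K) Σ_{k=1}^K [ L_{D_k}(h_k) + (1/2) d_{H∆H}(D_k, D) + λ_k ], where λ_k := inf_{h∈H} ( L_D(h) + L_{D_k}(h) ). -/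
/-! The risk is convex in the predictor, so the ensemble is no worse under `D` than the
average of its members, and each member obeys the single-source bound of Ben-David et al.:
for any `h ∈ H`,
`L_D(hₖ) ≤ L_D(h) + ε_D(hₖ, h) ≤ L_D(h) + ε_{Dₖ}(hₖ, h) + ½ d_{H∆H}(Dₖ, D)
  ≤ L_D(h) + L_{Dₖ}(h) + L_{Dₖ}(hₖ) + ½ d_{H∆H}(Dₖ, D)`,
where `ε_D(f, g)` is the probability that `f` and `g` disagree. For hypotheses, risks and
disagreements are probabilities of events, and each step is a union bound. -/

open MeasureTheory

namespace DomainAdaptation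

variable {X : Type*} [MeasurableSpace X]

noncomputable def disagreement (D : Measure (X × Bool)) (f g : X → Bool) : ℝ :=
  (D.map Prod.fst).real {x | f x ≠ g x}

lemma abs_toRealFn_sub_toRealFn {α : Type*} (f g : α → Bool) (a : α) :
    |toRealFn f a - toRealFn g a| = {a | f a ≠ g a}.indicator 1 a := by
  by_cases hf : f a <;> by_cases hg : g a <;> simp [toRealFn, Set.indicator, hf, hg]

lemma risk_toRealFn (D : Measure (X × Bool)) {h : X → Bool} (hh : Measurable h) :
    risk D (toRealFn h) = D.real {p | h p.1 ≠ p.2} := by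
  have hS := (measurableSet_eq_fun (hh.comp measurable_fst) measurable_snd).compl
  refine (integral_congr_ae (.of_forall fun p => ?_)).trans (integral_indicator_one hS)
  exact abs_toRealFn_sub_toRealFn (h ∘ Prod.fst) Prod.snd p

lemma integrable_risk_integrand_toRealFn (D : Measure (X × Bool)) [IsFiniteMeasure D]
    {h : X → Bool} (hh : Measurable h) :
    Integrable (fun p : X × Bool => |toRealFn h p.1 - (if p.2 then (1 : ℝ) else 0)|) D := by
  have hS := (measurableSet_eq_fun (hh.comp measurable_fst) measurable_snd).compl
  exact ((integrable_const (1 : ℝ)).indicator hS).congr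
    (.of_forall fun p => (abs_toRealFn_sub_toRealFn (h ∘ Prod.fst) Prod.snd p).symm)

lemma disagreement_eq (D : Measure (X × Bool)) {f g : X → Bool}
    (hf : Measurable f) (hg : Measurable g) :
    disagreement D f g = D.real {p | f p.1 ≠ g p.1} :=
  map_measureReal_apply measurable_fst (measurableSet_eq_fun hf hg).compl

lemma risk_le_risk_add_disagreement (D : Measure (X × Bool)) [IsFiniteMeasure D]
    {f g : X → Bool} (hf : Measurable f) (hg : Measurable g) :
    risk D (toRealFn f) ≤ risk D (toRealFn g) + disagreement D f g := by
  rw [risk_toRealFn D hf, risk_toRealFn D hg, disagreement_eq D hf hg]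
  refine (measureReal_mono fun p hp => ?_).trans (measureReal_union_le _ _)
  simp only [Set.mem_ofPred_eq, Set.mem_union] at hp ⊢
  grind

lemma disagreement_le_risk_add_risk (D : Measure (X × Bool)) [IsFiniteMeasure D]
    {f g : X → Bool} (hf : Measurable f) (hg : Measurable g) :
    disagreement D f g ≤ risk D (toRealFn f) + risk D (toRealFn g) := by
  rw [risk_toRealFn D hf, risk_toRealFn D hg, disagreement_eq D hf hg]
  refine (measureReal_mono fun p hp => ?_).trans (measureReal_union_le _ _)
  simp only [Set.mem_ofPred_eq, Set.mem_union] at hp ⊢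
  grind

lemma disagreement_le_one (D : Measure (X × Bool)) [IsProbabilityMeasure D] (f g : X → Bool) :
    disagreement D f g ≤ 1 :=
  haveI := Measure.isProbabilityMeasure_map (μ := D) measurable_fst.aemeasurable
  measureReal_le_one

lemma abs_disagreement_sub_le_half_dHdH {H : Set (X → Bool)}
    (D D' : Measure (X × Bool)) [IsProbabilityMeasure D] [IsProbabilityMeasure D']
    {f g : X → Bool} (hf : f ∈ H) (hg : g ∈ H) :
    |disagreement D f g - disagreement D' f g| ≤ (1 / 2 : ℝ) * dHdH H D D' := by
  set F : H → H → ℝ := fun h h' => |disagreement D h h' - disagreement D' h h'|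
  have hF_le_one h h' : F h h' ≤ 1 := by
    have := disagreement_le_one D h h'
    have := disagreement_le_one D' h h'
    have : 0 ≤ disagreement D h h' := measureReal_nonneg
    have : 0 ≤ disagreement D' h h' := measureReal_nonneg
    exact abs_sub_le_iff.mpr ⟨by linarith, by linarith⟩
  have hF_le_iSup : F ⟨f, hf⟩ ⟨g, hg⟩ ≤ ⨆ (h : H) (h' : H), F h h' := by
    refine (le_ciSup ⟨1, ?_⟩ ⟨g, hg⟩).trans
      (le_ciSup (f := fun h => ⨆ h', F h h') ⟨1, ?_⟩ ⟨f, hf⟩)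
    · rintro _ ⟨h', rfl⟩
      exact hF_le_one _ h'
    · rintro _ ⟨h, rfl⟩
      exact Real.iSup_le (hF_le_one h) zero_le_one
  have hdHdH : dHdH H D D' = 2 * ⨆ (h : H) (h' : H), F h h' := rfl
  rw [hdHdH]
  linarith

theorem risk_le_risk_add_half_dHdH_add_iInf (H : Set (X → Bool)) (hne : H.Nonempty)
    (hHmeas : ∀ h ∈ H, Measurable h)
    (DS DT : Measure (X × Bool)) [IsProbabilityMeasure DS] [IsProbabilityMeasure DT]
    {f : X → Bool} (hf : f ∈ H) :
    risk DT (toRealFn f) ≤ risk DS (toRealFn f) + (1 / 2 : ℝ) * dHdH H DS DT +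
      ⨅ h : H, (risk DT (toRealFn (h : X → Bool)) + risk DS (toRealFn (h : X → Bool))) := by
  have := hne.to_subtype
  rw [add_assoc, ← sub_le_iff_le_add', ← sub_le_iff_le_add']
  refine le_ciInf fun ⟨h, hh⟩ => ?_
  have hf_meas := hHmeas f hf
  have hh_meas := hHmeas h hh
  have hT := risk_le_risk_add_disagreement DT hf_meas hh_meas
  have hS := disagreement_le_risk_add_risk DS hf_meas hh_meas
  have hST := (abs_sub_le_iff.mp (abs_disagreement_sub_le_half_dHdH (H := H) DS DT hf hh)).2
  linarith

lemma risk_average_le {ι : Type*} [Fintype ι] [Nonempty ι] (D : Measure (X × Bool))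
    (f : ι → X → ℝ)
    (hf : ∀ i, Integrable (fun p : X × Bool => |f i p.1 - (if p.2 then (1 : ℝ) else 0)|) D) :
    risk D (fun x => (1 / Fintype.card ι : ℝ) * ∑ i, f i x) ≤
      (1 / Fintype.card ι : ℝ) * ∑ i, risk D (f i) := by
  unfold risk
  rw [← integral_finsetSum _ fun i _ => hf i, ← integral_const_mul]
  refine integral_mono_of_nonneg (.of_forall fun _ => abs_nonneg _)
    ((integrable_finsetSum _ fun i _ => hf i).const_mul _) (.of_forall fun p => ?_)
  set y : ℝ := if p.2 then 1 else 0
  have hn : (0 : ℝ) < Fintype.card ι := by exact_mod_cast Fintype.card_pos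
  calc |(1 / Fintype.card ι : ℝ) * ∑ i, f i p.1 - y|
      = |(1 / Fintype.card ι : ℝ) * ∑ i, (f i p.1 - y)| := by
        rw [Finset.sum_sub_distrib, Finset.sum_const, Finset.card_univ, nsmul_eq_mul]
        field_simp
    _ ≤ (1 / Fintype.card ι : ℝ) * ∑ i, |f i p.1 - y| := by
        rw [abs_mul, abs_of_pos (by positivity)]
        gcongr
        exact Finset.abs_sum_le_sum_abs _ _

end DomainAdaptation

/-- deterministic core of Theorem 1/2: the risk under `D` of the
ensemble of `h₁, …, h_K` is at most
`(1/K) ∑ₖ [ L_{Dₖ}(hₖ) + (1/2) d_{H∆H}(Dₖ, D) + λₖ ]`, where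
`λₖ = inf_{h ∈ H} (L_D(h) + L_{Dₖ}(h))`. -/
theorem ensemble_domain_adaptation_bound {X : Type*} [MeasurableSpace X]
    (H : Set (X → Bool)) (hne : H.Nonempty) (hHmeas : ∀ h ∈ H, Measurable h)
    (K : ℕ) (hK : 0 < K)
    (D : Measure (X × Bool)) [IsProbabilityMeasure D]
    (Dk : Fin K → Measure (X × Bool)) [∀ k, IsProbabilityMeasure (Dk k)]
    (hk : Fin K → (X → Bool)) (hkMem : ∀ k, hk k ∈ H) :
    risk D (fun x => (1 / K : ℝ) * ∑ k, (if hk k x then (1 : ℝ) else 0)) ≤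
      (1 / K : ℝ) * ∑ k,
        (risk (Dk k) (toRealFn (hk k)) + (1 / 2 : ℝ) * dHdH H (Dk k) D +
          ⨅ h : H, (risk D (toRealFn (h : X → Bool)) + risk (Dk k) (toRealFn (h : X → Bool)))) := by
  have : Nonempty (Fin K) := Fin.pos_iff_nonempty.mp hK
  calc risk D (fun x => (1 / K : ℝ) * ∑ k, toRealFn (hk k) x)
      ≤ (1 / K : ℝ) * ∑ k, risk D (toRealFn (hk k)) := by
        simpa using DomainAdaptation.risk_average_le D (fun k => toRealFn (hk k))
          fun k => DomainAdaptation.integrable_risk_integrand_toRealFn D (hHmeas _ (hkMem k))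
    _ ≤ _ := by
        gcongr with k
        exact DomainAdaptation.risk_le_risk_add_half_dHdH_add_iInf H hne hHmeas (Dk k) D
          (hkMem k)
end
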